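/- arXiv:2605.03622 — 4 statements merged into one kernel-verified Lean document; each statement's English description precedes it below -/
import Mathlib

section
/- Let f : Fin n → ℝ be a nonneg nondecreasing sequence (f i ≤ f j whenever i ≤ j, indexing scores in increasing order) and let k ≥ 1 be a natural number. Then the total sum ∑_{i=0}^{n-1} f(i) is at most (k+1) times the sum ∑_{j=0}^{⌈n/(k+1)⌉-1} f(n - 1 - (k+1)·j), i.e., the sum of every (k+1)-th largest element. -/
/-- Let `f` be a nonnegative nondecreasing sequence of `n` scores and `k ≥ 1`.
Then `∑_{i<n} f i ≤ (k+1) · ∑_{j<⌈n/(k+1)⌉} f (n - 1 - (k+1)j)`,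
i.e. the total sum is at most `(k+1)` times the sum of every `(k+1)`-th
largest element.  (Here `⌈n/(k+1)⌉ = (n + k)/(k+1)` in natural division.) -/
theorem stmt_1 (n k : ℕ) (hk : 1 ≤ k) (f : ℕ → ℝ)
    (hnonneg : ∀ i, i < n → 0 ≤ f i)
    (hmono : ∀ i j, i ≤ j → j < n → f i ≤ f j) :
    ∑ i ∈ Finset.range n, f i ≤
      (k + 1) * ∑ j ∈ Finset.range ((n + k) / (k + 1)), f (n - 1 - (k + 1) * j) := by
  rcases Nat.eq_zero_or_pos n with rfl | hn
  · simp [Nat.div_eq_of_lt (by omega : k < k + 1)]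
  have hm : (n + k) / (k + 1) = (n - 1) / (k + 1) + 1 := by
    have h : n + k = (n - 1) + 1 * (k + 1) := by omega
    rw [h, Nat.add_mul_div_right _ _ (by omega : 0 < k + 1)]
  have hmaps : ∀ i ∈ Finset.range n,
      (n - 1 - i) / (k + 1) ∈ Finset.range ((n + k) / (k + 1)) := by
    intro i hi
    simp only [Finset.mem_range] at *
    have h1 : (n - 1 - i) / (k + 1) ≤ (n - 1) / (k + 1) :=
      Nat.div_le_div_right (by omega)
    omega
  calc ∑ i ∈ Finset.range n, f i
      ≤ ∑ i ∈ Finset.range n, f (n - 1 - (k + 1) * ((n - 1 - i) / (k + 1))) := by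
        apply Finset.sum_le_sum
        intro i hi
        simp only [Finset.mem_range] at hi
        have h1 : (k + 1) * ((n - 1 - i) / (k + 1)) ≤ n - 1 - i :=
          Nat.mul_div_le _ _
        exact hmono _ _ (by omega) (by omega)
    _ = ∑ j ∈ Finset.range ((n + k) / (k + 1)),
          ∑ i ∈ (Finset.range n).filter (fun i => (n - 1 - i) / (k + 1) = j),
            f (n - 1 - (k + 1) * j) := by
        rw [← Finset.sum_fiberwise_of_maps_to hmaps
          (fun i => f (n - 1 - (k + 1) * ((n - 1 - i) / (k + 1))))]
        refine Finset.sum_congr rfl fun j _ => Finset.sum_congr rfl fun i hi => ?_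
        simp only [Finset.mem_filter] at hi
        rw [hi.2]
    _ ≤ ∑ j ∈ Finset.range ((n + k) / (k + 1)), (k + 1) * f (n - 1 - (k + 1) * j) := by
        apply Finset.sum_le_sum
        intro j hj
        simp only [Finset.mem_range] at hj
        rw [Finset.sum_const, nsmul_eq_mul]
        have hcard : ((Finset.range n).filter
            (fun i => (n - 1 - i) / (k + 1) = j)).card ≤ k + 1 := by
          have hsub : (Finset.range n).filter (fun i => (n - 1 - i) / (k + 1) = j) ⊆
              (Finset.range (k + 1)).image (fun r => n - 1 - (k + 1) * j - r) := by
            intro i hi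
            simp only [Finset.mem_filter, Finset.mem_range] at hi
            simp only [Finset.mem_image, Finset.mem_range]
            refine ⟨(n - 1 - i) % (k + 1), Nat.mod_lt _ (by omega), ?_⟩
            have hdm := Nat.div_add_mod (n - 1 - i) (k + 1)
            rw [hi.2] at hdm
            omega
          calc _ ≤ ((Finset.range (k + 1)).image
                (fun r => n - 1 - (k + 1) * j - r)).card := Finset.card_le_card hsub
            _ ≤ (Finset.range (k + 1)).card := Finset.card_image_le
            _ = k + 1 := by simp
        have hnn : 0 ≤ f (n - 1 - (k + 1) * j) := hnonneg _ (by omega)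
        have h3 : (((Finset.range n).filter
            (fun i => (n - 1 - i) / (k + 1) = j)).card : ℝ) ≤ (k : ℝ) + 1 := by
          exact_mod_cast hcard
        exact mul_le_mul_of_nonneg_right h3 hnn
    _ = (k + 1) * ∑ j ∈ Finset.range ((n + k) / (k + 1)), f (n - 1 - (k + 1) * j) :=
        (Finset.mul_sum _ _ _).symm
end

section
/- Consider a rooted tree T on n vertices and a depth-first search that, at each vertex, always descends into the smallest unexplored subtree first. At any point during the search, the number of already-visited vertices that still have an unvisited neighbor is O(log n); more precisely, it is at most log₂ n. -/
/-- `u` lies in the subtree rooted at `v` in the rooted tree given by the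
parent function `parent` (i.e. `v` is reachable from `u` by parent steps). -/
def InSubtree {V : Type*} (parent : V → V) (u v : V) : Prop :=
  Relation.ReflTransGen (fun a b => parent a = b) u v

/-- After `i` steps of the DFS with visiting order `σ` (so the visited vertices
are those `v` with `σ.symm v < i`), the set of visited vertices that still have
an unvisited neighbor in the tree. -/
def openVertices {n : ℕ} (parent : Fin n → Fin n) (σ : Fin n ≃ Fin n) (i : ℕ) :
    Set (Fin n) :=
  {v | (σ.symm v : ℕ) < i ∧
    ∃ u : Fin n, ((parent u = v ∧ u ≠ v) ∨ (parent v = u ∧ v ≠ u)) ∧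
      ¬ (σ.symm u : ℕ) < i}

/-!
An open vertex has a child that is still unvisited, and since a subtree is visited contiguously,
every vertex visited after an open vertex `w` lies in the subtree of `w`; so the open vertices form
a chain of ancestors. If `v` is open strictly below `w`, then `v` lies in the subtree of a visited
child `c'` of `w`, while `w` has an unvisited child `c`, entered after `c'`. Smallest-first gives
`sz v ≤ sz c' ≤ sz c`, hence `2 * sz v < sz w`. Every open vertex has `sz ≥ 2`, so `k` open
vertices force a subtree of size at least `2 ^ k`.
-/

theorem Finset.exists_two_pow_card_le {α : Type*} (f : α → ℕ) (s : Finset α)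
    (hs : s.Nonempty) (htwo : ∀ a ∈ s, 2 ≤ f a)
    (hdouble : (s : Set α).Pairwise fun a b => 2 * f a ≤ f b ∨ 2 * f b ≤ f a) :
    ∃ a ∈ s, 2 ^ s.card ≤ f a := by
  classical
  induction s using Finset.induction_on_max_value f with
  | empty => exact absurd hs Finset.not_nonempty_empty
  | insert a s ha hmax ih =>
    rw [Finset.card_insert_of_notMem ha]
    have htwo_a : 2 ≤ f a := htwo a (Finset.mem_insert_self a s)
    rcases s.eq_empty_or_nonempty with rfl | hs'
    · exact ⟨a, Finset.mem_insert_self a ∅, by simpa using htwo_a⟩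
    obtain ⟨b, hb, hpow⟩ := ih hs' (fun x hx => htwo x (Finset.mem_insert_of_mem hx))
      (hdouble.mono (by simp))
    have hba : b ≠ a := fun h => ha (h ▸ hb)
    have hfb := hmax b hb
    have : 2 * f b ≤ f a := by
      rcases hdouble (by simp [hb]) (by simp) hba with h | h
      · exact h
      · omega
    exact ⟨a, Finset.mem_insert_self a s, by rw [pow_succ]; omega⟩

def subtree {V : Type*} (parent : V → V) (v : V) : Set V := {u | InSubtree parent u v}

namespace InSubtree

variable {V : Type*} {parent : V → V} {a b c u v : V}

theorem rfl : InSubtree parent a a := Relation.ReflTransGen.refl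

theorem of_parent_eq (h : parent a = b) : InSubtree parent a b := Relation.ReflTransGen.single h

theorem trans (h₁ : InSubtree parent a b) (h₂ : InSubtree parent b c) : InSubtree parent a c :=
  Relation.ReflTransGen.trans h₁ h₂

theorem total (h₁ : InSubtree parent u a) (h₂ : InSubtree parent u b) :
    InSubtree parent a b ∨ InSubtree parent b a :=
  Relation.ReflTransGen.total_of_right_unique (fun _ _ _ h h' => h.symm.trans h') h₁ h₂

theorem exists_child (h : InSubtree parent u v) (hne : u ≠ v) :
    ∃ c, parent c = v ∧ c ≠ v ∧ InSubtree parent u c := by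
  induction h with
  | refl => exact absurd _root_.rfl hne
  | @tail b c hub hbc ih =>
    by_cases hbc' : b = c
    · subst hbc'
      exact ih hne
    · exact ⟨b, hbc, hbc', hub⟩

variable {r : V} {β : Type*} [Preorder β] {t : V → β}

theorem rank_lt (hroot : parent r = r) (hrank : ∀ v, v ≠ r → t (parent v) < t v)
    (h : InSubtree parent a b) (hne : a ≠ b) : t b < t a := by
  induction h with
  | refl => exact absurd _root_.rfl hne
  | @tail b c hab hbc ih =>
    by_cases hbr : b = r
    · subst hbr
      rw [hroot] at hbc
      exact hbc ▸ ih (hbc ▸ hne)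
    · rw [← hbc]
      by_cases hab' : a = b
      · exact hab' ▸ hrank b hbr
      · exact (hrank b hbr).trans (ih hab')

theorem rank_le (hroot : parent r = r) (hrank : ∀ v, v ≠ r → t (parent v) < t v)
    (h : InSubtree parent a b) : t b ≤ t a := by
  by_cases hab : a = b
  · rw [hab]
  · exact (h.rank_lt hroot hrank hab).le

theorem antisymm (hroot : parent r = r) (hrank : ∀ v, v ≠ r → t (parent v) < t v)
    (h₁ : InSubtree parent a b) (h₂ : InSubtree parent b a) : a = b := by
  by_contra hab
  exact lt_asymm (h₁.rank_lt hroot hrank hab) (h₂.rank_lt hroot hrank (Ne.symm hab))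

end InSubtree

section Subtree

variable {V : Type*} {parent : V → V} {a b c c' v : V}

theorem subtree_mono (h : InSubtree parent a b) : subtree parent a ⊆ subtree parent b :=
  fun _ hu => InSubtree.trans hu h

theorem two_le_ncard_subtree [Finite V] (hc : parent c = v) (hcv : c ≠ v) :
    2 ≤ (subtree parent v).ncard := by
  rw [← Set.ncard_pair hcv]
  exact Set.ncard_le_ncard (Set.pair_subset (InSubtree.of_parent_eq hc) InSubtree.rfl)

variable {r : V} {β : Type*} [Preorder β] {t : V → β}

theorem disjoint_subtree_of_parent_eq (hroot : parent r = r)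
    (hrank : ∀ v, v ≠ r → t (parent v) < t v) (hc : parent c = v) (hcv : c ≠ v)
    (hc' : parent c' = v) (hc'v : c' ≠ v) (hne : c ≠ c') :
    Disjoint (subtree parent c) (subtree parent c') := by
  -- a child `x` of `v` strictly inside the subtree of another child would put `v` below it
  have below_sibling : ∀ {x y}, parent x = v → parent y = v → y ≠ v → x ≠ y →
      ¬ InSubtree parent x y := by
    intro x y hx hy hyv hxy h
    rcases Relation.ReflTransGen.cases_head h with rfl | ⟨_, rfl, hvy⟩
    · exact hxy _root_.rfl
    · rw [hx] at hvy
      exact hyv (InSubtree.antisymm hroot hrank (InSubtree.of_parent_eq hy) hvy)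
  refine Set.disjoint_left.mpr fun u hu hu' => ?_
  rcases InSubtree.total hu hu' with h | h
  · exact below_sibling hc hc' hc'v hne h
  · exact below_sibling hc' hc hcv (Ne.symm hne) h

theorem ncard_subtree_add_lt [Finite V] (hroot : parent r = r)
    (hrank : ∀ v, v ≠ r → t (parent v) < t v) (hc : parent c = v) (hcv : c ≠ v)
    (hc' : parent c' = v) (hc'v : c' ≠ v) (hne : c ≠ c') :
    (subtree parent c).ncard + (subtree parent c').ncard < (subtree parent v).ncard := by
  have hv : v ∉ subtree parent c ∪ subtree parent c' := by
    rintro (h | h)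
    · exact hcv (InSubtree.antisymm hroot hrank (InSubtree.of_parent_eq hc) h)
    · exact hc'v (InSubtree.antisymm hroot hrank (InSubtree.of_parent_eq hc') h)
  have hsub : insert v (subtree parent c ∪ subtree parent c') ⊆ subtree parent v :=
    Set.insert_subset InSubtree.rfl (Set.union_subset (subtree_mono (InSubtree.of_parent_eq hc))
      (subtree_mono (InSubtree.of_parent_eq hc')))
  have := Set.ncard_le_ncard hsub
  rw [Set.ncard_insert_of_notMem hv,
    Set.ncard_union_eq (disjoint_subtree_of_parent_eq hroot hrank hc hcv hc' hc'v hne)] at this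
  omega

end Subtree

section OpenVertices

variable {n : ℕ} {parent : Fin n → Fin n} {r : Fin n} {σ : Fin n ≃ Fin n} {i : ℕ}
  {v w : Fin n}

theorem exists_unvisited_child_of_mem_openVertices (hroot : parent r = r)
    (hparent : ∀ v, v ≠ r → σ.symm (parent v) < σ.symm v) (hv : v ∈ openVertices parent σ i) :
    ∃ c, parent c = v ∧ c ≠ v ∧ i ≤ σ.symm c := by
  obtain ⟨hvi, u, ⟨hu, huv⟩ | ⟨hu, hvu⟩, hui⟩ := hv
  · exact ⟨u, hu, huv, not_lt.mp hui⟩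
  · have hvr : v ≠ r := by
      rintro rfl
      exact hvu (hu ▸ hroot.symm)
    have := Fin.lt_def.mp (hparent v hvr)
    rw [hu] at this
    omega

theorem InSubtree.of_mem_openVertices (hroot : parent r = r)
    (hparent : ∀ v, v ≠ r → σ.symm (parent v) < σ.symm v)
    (hcontig : ∀ v u w, InSubtree parent u v →
      σ.symm v ≤ σ.symm w → σ.symm w ≤ σ.symm u → InSubtree parent w v)
    (hv : v ∈ openVertices parent σ i) (hw : w ∈ openVertices parent σ i)
    (hvw : σ.symm v ≤ σ.symm w) : InSubtree parent w v := by
  obtain ⟨c, hc, -, hci⟩ := exists_unvisited_child_of_mem_openVertices hroot hparent hv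
  exact hcontig v c w (.of_parent_eq hc) hvw (Fin.le_def.mpr (by have := hw.1; omega))

theorem two_mul_ncard_subtree_le_of_mem_openVertices (hroot : parent r = r)
    (hparent : ∀ v, v ≠ r → σ.symm (parent v) < σ.symm v)
    (hsmall : ∀ u w, u ≠ r → w ≠ r → parent u = parent w → σ.symm u < σ.symm w →
      (subtree parent u).ncard ≤ (subtree parent w).ncard)
    (hv : v ∈ openVertices parent σ i) (hw : w ∈ openVertices parent σ i)
    (hvw : InSubtree parent v w) (hne : v ≠ w) :
    2 * (subtree parent v).ncard ≤ (subtree parent w).ncard := by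
  obtain ⟨c, hc, hcw, hci⟩ := exists_unvisited_child_of_mem_openVertices hroot hparent hw
  obtain ⟨c', hc', hc'w, hvc'⟩ := hvw.exists_child hne
  have hc'i : (σ.symm c' : ℕ) < i :=
    lt_of_le_of_lt (Fin.le_def.mp (hvc'.rank_le hroot hparent)) hv.1
  have hnot_root : ∀ {x}, parent x = w → x ≠ w → x ≠ r := by
    rintro x hx hxw rfl
    exact hxw (hroot ▸ hx)
  have hsizes := hsmall c' c (hnot_root hc' hc'w) (hnot_root hc hcw) (hc'.trans hc.symm)
    (Fin.lt_def.mpr (by omega))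
  have hsum := ncard_subtree_add_lt hroot hparent hc hcw hc' hc'w (by rintro rfl; omega)
  have hvc'_le := Set.ncard_le_ncard (subtree_mono hvc')
  omega

theorem two_le_ncard_subtree_of_mem_openVertices (hroot : parent r = r)
    (hparent : ∀ v, v ≠ r → σ.symm (parent v) < σ.symm v) (hv : v ∈ openVertices parent σ i) :
    2 ≤ (subtree parent v).ncard := by
  obtain ⟨c, hc, hcv, -⟩ := exists_unvisited_child_of_mem_openVertices hroot hparent hv
  exact two_le_ncard_subtree hc hcv

theorem two_mul_ncard_subtree_le_or_of_mem_openVertices (hroot : parent r = r)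
    (hparent : ∀ v, v ≠ r → σ.symm (parent v) < σ.symm v)
    (hcontig : ∀ v u w, InSubtree parent u v →
      σ.symm v ≤ σ.symm w → σ.symm w ≤ σ.symm u → InSubtree parent w v)
    (hsmall : ∀ u w, u ≠ r → w ≠ r → parent u = parent w → σ.symm u < σ.symm w →
      (subtree parent u).ncard ≤ (subtree parent w).ncard)
    (hv : v ∈ openVertices parent σ i) (hw : w ∈ openVertices parent σ i) (hvw : v ≠ w) :
    2 * (subtree parent v).ncard ≤ (subtree parent w).ncard ∨
      2 * (subtree parent w).ncard ≤ (subtree parent v).ncard := by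
  rcases le_total (σ.symm v) (σ.symm w) with h | h
  · exact .inr <| two_mul_ncard_subtree_le_of_mem_openVertices hroot hparent hsmall hw hv
      (.of_mem_openVertices hroot hparent hcontig hv hw h) (Ne.symm hvw)
  · exact .inl <| two_mul_ncard_subtree_le_of_mem_openVertices hroot hparent hsmall hv hw
      (.of_mem_openVertices hroot hparent hcontig hw hv h) hvw

end OpenVertices

theorem stmt_4_general (n : ℕ) (parent : Fin n → Fin n) (r : Fin n)
    (hroot : parent r = r)
    (sz : Fin n → ℕ)
    (hsz : ∀ v, sz v = {u | InSubtree parent u v}.ncard)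
    (σ : Fin n ≃ Fin n)   -- `σ j` is the `j`-th vertex visited by the DFS
    -- every vertex is visited after its parent:
    (hparent : ∀ v, v ≠ r → σ.symm (parent v) < σ.symm v)
    -- DFS visits each subtree contiguously:
    (hcontig : ∀ v u w, InSubtree parent u v →
      σ.symm v ≤ σ.symm w → σ.symm w ≤ σ.symm u → InSubtree parent w v)
    -- among the children of a common parent, smaller subtrees are entered first:
    (hsmall : ∀ u w, u ≠ r → w ≠ r → parent u = parent w →
      σ.symm u < σ.symm w → sz u ≤ sz w) :
    ∀ i : ℕ, (openVertices parent σ i).ncard ≤ Nat.log 2 n := by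
  intro i
  obtain rfl : sz = fun v => (subtree parent v).ncard := funext hsz
  obtain ⟨S, hS⟩ := (openVertices parent σ i).toFinite.exists_finset_coe
  rw [← hS, Set.ncard_coe_finset]
  rcases S.eq_empty_or_nonempty with rfl | hne
  · exact Nat.zero_le _
  have hopen : ∀ {v}, v ∈ S → v ∈ openVertices parent σ i := fun hv => hS ▸ hv
  obtain ⟨v, -, hv⟩ := S.exists_two_pow_card_le (fun v => (subtree parent v).ncard) hne
    (fun v hv => two_le_ncard_subtree_of_mem_openVertices hroot hparent (hopen hv))
    (fun v hv w hw hvw => two_mul_ncard_subtree_le_or_of_mem_openVertices hroot hparent hcontig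
      hsmall (hopen hv) (hopen hw) hvw)
  exact Nat.le_log_of_pow_le one_lt_two (hv.trans ((Set.ncard_le_card _).trans (by simp)))

/-- Consider a rooted tree on `n` vertices (given by a parent function with
root `r`) and a depth-first search that always descends into a smallest
unexplored subtree first.  At any point during the search, the number of
already-visited vertices that still have an unvisited neighbor is at most
`log₂ n`. -/
theorem stmt_4 (n : ℕ) (parent : Fin n → Fin n) (r : Fin n)
    (hroot : parent r = r)
    (hreach : ∀ v, InSubtree parent v r)
    (sz : Fin n → ℕ)
    (hsz : ∀ v, sz v = {u | InSubtree parent u v}.ncard)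
    (σ : Fin n ≃ Fin n)   -- `σ j` is the `j`-th vertex visited by the DFS
    (hstart : ∀ v, σ.symm r ≤ σ.symm v)
    -- every vertex is visited after its parent:
    (hparent : ∀ v, v ≠ r → σ.symm (parent v) < σ.symm v)
    -- DFS visits each subtree contiguously:
    (hcontig : ∀ v u w, InSubtree parent u v →
      σ.symm v ≤ σ.symm w → σ.symm w ≤ σ.symm u → InSubtree parent w v)
    -- among the children of a common parent, smaller subtrees are entered first:
    (hsmall : ∀ u w, u ≠ r → w ≠ r → parent u = parent w →
      σ.symm u < σ.symm w → sz u ≤ sz w) :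
    ∀ i : ℕ, (openVertices parent σ i).ncard ≤ Nat.log 2 n :=
  stmt_4_general n parent r hroot sz hsz σ hparent hcontig hsmall
end

section
/- Let G = (V', E) be a finite simple undirected graph and let p be a new vertex not in V' ∪ E. Construct a directed graph D on vertex set V' ∪ E ∪ {p} as follows: given a subset I ⊆ V', for each v ∈ I add arcs from every edge e ∈ E incident to v into v, and an arc from p into v. Then the underlying undirected graph of D is acyclic if and only if I is an independent set of G. -/
/-!
In the skeleton, a vertex of `G` is adjacent only to `p` and to edge nodes, `p` and edge nodes
are adjacent only to vertices of `G`, and an edge node `s(u, v)` is adjacent to exactly those of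
`u, v` that lie in `I`. If `u, v ∈ I` are adjacent in `G`, then `p, u, s(u, v), v` is a 4-cycle.
Conversely, a cycle must pass through a vertex of `I`, whose two cycle neighbours cannot both
be `p`; so it passes through an edge node, whose two cycle neighbours are then distinct
endpoints of that edge lying in `I`.
-/

/-- The skeleton (underlying undirected graph) of the directed graph `D` built
from a graph `G` and a vertex subset `I`: the node set consists of the vertices
of `G`, the edges of `G` (as separate nodes) and one extra node `p` (the unique
element of `Unit`); for each `v ∈ I` there are arcs into `v` from every edge
node `e` incident to `v` and from `p`; all other nodes have no parents. -/
def ptSkeleton {V : Type*} (G : SimpleGraph V) (I : Set V) :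
    SimpleGraph (V ⊕ (G.edgeSet ⊕ Unit)) :=
  SimpleGraph.fromRel (fun a b =>
    match a, b with
    | Sum.inr (Sum.inl e), Sum.inl v => v ∈ I ∧ v ∈ (e : Sym2 V)
    | Sum.inr (Sum.inr _), Sum.inl v => v ∈ I
    | _, _ => False)

namespace SimpleGraph.Walk

variable {W : Type*} {H : SimpleGraph W}

lemma IsCycle.exists_adj_ne_of_mem_support {v x : W} {c : H.Walk v v} (hc : c.IsCycle)
    (hx : x ∈ c.support) :
    ∃ b ∈ c.support, ∃ t ∈ c.support, b ≠ t ∧ H.Adj x b ∧ H.Adj x t := by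
  classical
  set c' := c.rotate x hx
  have hc' : c'.IsCycle := hc.rotate hx
  refine ⟨c'.snd, ?_, c'.penultimate, ?_, hc'.snd_ne_penultimate, c'.adj_snd hc'.not_nil,
    (c'.adj_penultimate hc'.not_nil).symm⟩ <;>
  exact (mem_support_rotate_iff c x hx).mp (getVert_mem_support _ _)

end SimpleGraph.Walk

section ptSkeleton

open SimpleGraph

variable {V : Type*} {G : SimpleGraph V} {I : Set V}

@[simp]
lemma ptSkeleton_not_adj_inl_inl {u v : V} :
    ¬ (ptSkeleton G I).Adj (Sum.inl u) (Sum.inl v) := by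
  simp [ptSkeleton]

@[simp]
lemma ptSkeleton_not_adj_inr_inr {a b : G.edgeSet ⊕ Unit} :
    ¬ (ptSkeleton G I).Adj (Sum.inr a) (Sum.inr b) := by
  rcases a with _ | _ <;> rcases b with _ | _ <;> simp [ptSkeleton]

@[simp]
lemma ptSkeleton_adj_inl_edge {v : V} {e : G.edgeSet} :
    (ptSkeleton G I).Adj (Sum.inl v) (Sum.inr (Sum.inl e)) ↔ v ∈ I ∧ v ∈ (e : Sym2 V) := by
  simp [ptSkeleton]

@[simp]
lemma ptSkeleton_adj_inl_apex {v : V} {u : Unit} :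
    (ptSkeleton G I).Adj (Sum.inl v) (Sum.inr (Sum.inr u)) ↔ v ∈ I := by
  simp [ptSkeleton]

lemma not_isAcyclic_ptSkeleton_of_adj {u v : V} (hu : u ∈ I) (hv : v ∈ I) (huv : G.Adj u v) :
    ¬ (ptSkeleton G I).IsAcyclic := by
  let e : G.edgeSet := ⟨s(u, v), huv⟩
  have h₁ : (ptSkeleton G I).Adj (Sum.inr (Sum.inr ())) (Sum.inl u) := by simpa [adj_comm]
  have h₂ : (ptSkeleton G I).Adj (Sum.inl u) (Sum.inr (Sum.inl e)) := by simpa [e]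
  have h₃ : (ptSkeleton G I).Adj (Sum.inr (Sum.inl e)) (Sum.inl v) := by simpa [adj_comm, e]
  have h₄ : (ptSkeleton G I).Adj (Sum.inl v) (Sum.inr (Sum.inr ())) := by simpa
  intro hac
  refine hac (.cons h₁ (.cons h₂ (.cons h₃ (.cons h₄ .nil)))) ?_
  simp [Walk.isCycle_def, Walk.isTrail_def, e, huv.ne]

lemma ptSkeleton_exists_inl_of_adj_inr {a : G.edgeSet ⊕ Unit} {b : V ⊕ (G.edgeSet ⊕ Unit)}
    (h : (ptSkeleton G I).Adj (Sum.inr a) b) : ∃ v, b = Sum.inl v := by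
  rcases b with v | b
  · exact ⟨v, rfl⟩
  · exact absurd h ptSkeleton_not_adj_inr_inr

lemma ptSkeleton_exists_edge_mem_support {x : V ⊕ (G.edgeSet ⊕ Unit)}
    {c : (ptSkeleton G I).Walk x x} (hc : c.IsCycle) :
    ∃ e : G.edgeSet, Sum.inr (Sum.inl e) ∈ c.support := by
  obtain ⟨w, hw⟩ : ∃ w, Sum.inl w ∈ c.support := by
    rcases x with w | a
    · exact ⟨w, c.start_mem_support⟩
    · obtain ⟨b, hb, -, -, -, hab, -⟩ := hc.exists_adj_ne_of_mem_support c.start_mem_support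
      obtain ⟨w, rfl⟩ := ptSkeleton_exists_inl_of_adj_inr hab
      exact ⟨w, hb⟩
  obtain ⟨b, hb, t, ht, hbt, hwb, hwt⟩ := hc.exists_adj_ne_of_mem_support hw
  rcases b with _ | e | ⟨⟩
  · exact absurd hwb ptSkeleton_not_adj_inl_inl
  · exact ⟨e, hb⟩
  rcases t with _ | e | ⟨⟩
  · exact absurd hwt ptSkeleton_not_adj_inl_inl
  · exact ⟨e, ht⟩
  · exact absurd rfl hbt

lemma isAcyclic_ptSkeleton_of_forall_not_adj (hI : ∀ u ∈ I, ∀ v ∈ I, ¬ G.Adj u v) :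
    (ptSkeleton G I).IsAcyclic := by
  intro x c hc
  obtain ⟨e, he⟩ := ptSkeleton_exists_edge_mem_support hc
  obtain ⟨b, -, t, -, hbt, heb, het⟩ := hc.exists_adj_ne_of_mem_support he
  obtain ⟨u, rfl⟩ := ptSkeleton_exists_inl_of_adj_inr heb
  obtain ⟨v, rfl⟩ := ptSkeleton_exists_inl_of_adj_inr het
  obtain ⟨hu, hue⟩ := ptSkeleton_adj_inl_edge.mp heb.symm
  obtain ⟨hv, hve⟩ := ptSkeleton_adj_inl_edge.mp het.symm
  have huv : u ≠ v := fun h => hbt (congrArg Sum.inl h)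
  exact hI u hu v hv (G.adj_iff_exists_edge.mpr ⟨huv, e, e.2, hue, hve⟩)

end ptSkeleton

theorem stmt_6_general {V : Type*} (G : SimpleGraph V) (I : Set V) :
    (ptSkeleton G I).IsAcyclic ↔ ∀ u ∈ I, ∀ v ∈ I, ¬ G.Adj u v :=
  ⟨fun hac _ hu _ hv huv => not_isAcyclic_ptSkeleton_of_adj hu hv huv hac,
    isAcyclic_ptSkeleton_of_forall_not_adj⟩

/-- The underlying undirected graph of the construction is acyclic iff `I` is
an independent set of `G`. -/
theorem stmt_6 {V : Type*} [Fintype V] (G : SimpleGraph V) (I : Set V) :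
    (ptSkeleton G I).IsAcyclic ↔ ∀ u ∈ I, ∀ v ∈ I, ¬ G.Adj u v :=
  stmt_6_general G I
end

section
/- Let T be a rooted k-ary complete tree on n vertices. There is a point during any depth-first search of T at which the number of visited vertices having at least one unvisited neighbor is Ω(log n / log k); hence the O(log n) bound on open vertices in DFS with smallest-subtree-first order is tight up to constant factors for constant k. -/
lemma insubtree_iter {V : Type*} (parent : V → V) (v : V) (m : ℕ) :
    InSubtree parent v (parent^[m] v) := by
  induction m with
  | zero => exact Relation.ReflTransGen.refl
  | succ m ih =>
    rw [Function.iterate_succ_apply']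
    exact ih.tail rfl

lemma insubtree_exists_iter {V : Type*} {parent : V → V} {u v : V}
    (h : InSubtree parent u v) : ∃ m, v = parent^[m] u := by
  induction h with
  | refl => exact ⟨0, rfl⟩
  | tail _ hbc ih =>
    obtain ⟨m, rfl⟩ := ih
    exact ⟨m + 1, by rw [Function.iterate_succ_apply', hbc]⟩

/-- Let `T` be a complete `k`-ary rooted tree on `n` vertices: every internal
node (depth `< d`) has exactly `k` children and all leaves are at depth `d`.
During any depth-first search of `T` there is a point at which the number of
visited vertices having an unvisited neighbor is at least `log_k n`
(`Ω(log n / log k)`); hence the `O(log n)` bound on open vertices for DFS is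
tight up to constant factors for constant `k`. -/
theorem stmt_12 (n k d : ℕ) (parent : Fin n → Fin n) (r : Fin n)
    (δ : Fin n → ℕ)
    (hroot : parent r = r)
    (hreach : ∀ v, InSubtree parent v r)
    (hδr : δ r = 0)
    (hδ : ∀ v, v ≠ r → δ v = δ (parent v) + 1)
    (hdepth : ∀ v, δ v ≤ d)
    (hinternal : ∀ v, δ v < d → {u | parent u = v ∧ u ≠ r}.ncard = k)
    (hleaf : ∀ v, δ v = d → {u | parent u = v ∧ u ≠ r} = ∅)
    (σ : Fin n ≃ Fin n)   -- `σ j` is the `j`-th vertex visited by the DFS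
    (hstart : ∀ v, σ.symm r ≤ σ.symm v)
    -- every vertex is visited after its parent:
    (hparent : ∀ v, v ≠ r → σ.symm (parent v) < σ.symm v)
    -- DFS visits each subtree contiguously:
    (hcontig : ∀ v u w, InSubtree parent u v →
      σ.symm v ≤ σ.symm w → σ.symm w ≤ σ.symm u → InSubtree parent w v) :
    ∃ i ≤ n, Nat.log k n ≤ (openVertices parent σ i).ncard := by
  -- trivial case k ≤ 1
  rcases le_or_gt k 1 with hk | hk
  · refine ⟨0, Nat.zero_le n, ?_⟩
    have : Nat.log k n = 0 := Nat.log_of_left_le_one hk n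
    simp [this]
  -- now k ≥ 2
  have hn0 : n ≠ 0 := r.pos.ne'
  -- depth-zero vertex is the root
  have hδ0 : ∀ v : Fin n, δ v = 0 → v = r := by
    intro v hv
    by_contra hvr
    have := hδ v hvr
    omega
  -- children set as a Finset
  have hchild_card : ∀ v : Fin n, δ v < d →
      (Finset.univ.filter fun u => parent u = v ∧ u ≠ r).card = k := by
    intro v hv
    have h1 := hinternal v hv
    have h2 : {u : Fin n | parent u = v ∧ u ≠ r} =
        ↑(Finset.univ.filter fun u => parent u = v ∧ u ≠ r) := by
      ext u; simp
    rw [h2, Set.ncard_coe_finset] at h1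
    exact h1
  -- counting: card of depth-j slice ≤ k^j
  have hslice : ∀ j : ℕ,
      (Finset.univ.filter fun v : Fin n => δ v = j).card ≤ k ^ j := by
    intro j
    induction j with
    | zero =>
      have : (Finset.univ.filter fun v : Fin n => δ v = 0) ⊆ {r} := by
        intro v hv
        simp only [Finset.mem_filter] at hv
        simp [hδ0 v hv.2]
      simpa using Finset.card_le_card this
    | succ j ih =>
      rcases le_or_gt d j with hdj | hdj
      · have : (Finset.univ.filter fun v : Fin n => δ v = j + 1) = ∅ := by
          apply Finset.eq_empty_of_forall_notMem
          intro v hv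
          simp only [Finset.mem_filter] at hv
          have := hdepth v
          omega
        simp [this]
      · -- j < d : each depth-(j+1) vertex is a child of a depth-j vertex
        have hsub : (Finset.univ.filter fun v : Fin n => δ v = j + 1) ⊆
            (Finset.univ.filter fun v : Fin n => δ v = j).biUnion
              (fun v => Finset.univ.filter fun u => parent u = v ∧ u ≠ r) := by
          intro u hu
          simp only [Finset.mem_filter] at hu
          have hur : u ≠ r := by
            intro h; rw [h, hδr] at hu; omega
          have hpu : δ (parent u) = j := by
            have := hδ u hur; omega
          simp only [Finset.mem_biUnion, Finset.mem_filter]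
          exact ⟨parent u, ⟨Finset.mem_univ _, hpu⟩, Finset.mem_univ _, rfl, hur⟩
        calc (Finset.univ.filter fun v : Fin n => δ v = j + 1).card
            ≤ ((Finset.univ.filter fun v : Fin n => δ v = j).biUnion
              (fun v => Finset.univ.filter fun u => parent u = v ∧ u ≠ r)).card :=
              Finset.card_le_card hsub
          _ ≤ ∑ v ∈ Finset.univ.filter (fun v : Fin n => δ v = j),
              (Finset.univ.filter fun u => parent u = v ∧ u ≠ r).card :=
              Finset.card_biUnion_le
          _ ≤ ∑ _v ∈ Finset.univ.filter (fun v : Fin n => δ v = j), k := by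
              apply Finset.sum_le_sum
              intro v hv
              simp only [Finset.mem_filter] at hv
              exact (hchild_card v (by omega)).le
          _ = (Finset.univ.filter fun v : Fin n => δ v = j).card * k := by
              rw [Finset.sum_const, smul_eq_mul]
          _ ≤ k ^ j * k := Nat.mul_le_mul_right k ih
          _ = k ^ (j + 1) := by ring
  -- total count: n < k^(d+1)
  have hcount : n < k ^ (d + 1) := by
    have hsub : (Finset.univ : Finset (Fin n)) ⊆
        (Finset.range (d + 1)).biUnion
          (fun j => Finset.univ.filter fun v : Fin n => δ v = j) := by
      intro v _
      simp only [Finset.mem_biUnion, Finset.mem_range, Finset.mem_filter]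
      exact ⟨δ v, by have := hdepth v; omega, Finset.mem_univ _, rfl⟩
    calc n = (Finset.univ : Finset (Fin n)).card := by simp
      _ ≤ ((Finset.range (d + 1)).biUnion
            (fun j => Finset.univ.filter fun v : Fin n => δ v = j)).card :=
          Finset.card_le_card hsub
      _ ≤ ∑ j ∈ Finset.range (d + 1),
            (Finset.univ.filter fun v : Fin n => δ v = j).card :=
          Finset.card_biUnion_le
      _ ≤ ∑ j ∈ Finset.range (d + 1), k ^ j :=
          Finset.sum_le_sum fun j _ => hslice j
      _ < k ^ (d + 1) := Nat.geomSum_lt hk (fun j hj => Finset.mem_range.mp hj)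
  have hlog : Nat.log k n ≤ d := by
    have := Nat.log_lt_of_lt_pow hn0 hcount
    omega
  -- existence of a depth-d vertex
  have hexleaf : ∀ v : Fin n, ∃ u : Fin n, InSubtree parent u v ∧ δ u = d := by
    intro v
    have key : ∀ m : ℕ, ∀ v : Fin n, d - δ v ≤ m →
        ∃ u : Fin n, InSubtree parent u v ∧ δ u = d := by
      intro m
      induction m with
      | zero =>
        intro v hv
        exact ⟨v, Relation.ReflTransGen.refl, by have := hdepth v; omega⟩
      | succ m ih =>
        intro v hv
        rcases eq_or_lt_of_le (hdepth v) with heq | hlt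
        · exact ⟨v, Relation.ReflTransGen.refl, heq⟩
        · have hc := hchild_card v hlt
          have hne : (Finset.univ.filter fun u => parent u = v ∧ u ≠ r).Nonempty := by
            rw [← Finset.card_pos, hc]; omega
          obtain ⟨c, hc'⟩ := hne
          simp only [Finset.mem_filter] at hc'
          have hδc : δ c = δ v + 1 := by
            have := hδ c hc'.2.2; rw [hc'.2.1] at this; exact this
          obtain ⟨u, hu1, hu2⟩ := ih c (by omega)
          exact ⟨u, Relation.ReflTransGen.trans hu1
            (Relation.ReflTransGen.single hc'.2.1), hu2⟩
    exact key (d - δ v) v le_rfl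
  -- choose ℓ minimizing σ.symm among depth-d vertices
  have hDne : (Finset.univ.filter fun v : Fin n => δ v = d).Nonempty := by
    obtain ⟨u, _, hu⟩ := hexleaf r
    exact ⟨u, by simp [hu]⟩
  obtain ⟨ℓ, hℓD, hℓmin⟩ := Finset.exists_min_image _ (fun v => (σ.symm v : ℕ)) hDne
  simp only [Finset.mem_filter] at hℓD
  have hδℓ : δ ℓ = d := hℓD.2
  -- depths along the ancestor chain of ℓ
  have hiterδ : ∀ m, m ≤ d → δ (parent^[m] ℓ) = d - m := by
    intro m
    induction m with
    | zero => intro _; simpa using hδℓ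
    | succ m ih =>
      intro hm
      have h1 := ih (by omega)
      have hne : parent^[m] ℓ ≠ r := by
        intro h; rw [h, hδr] at h1; omega
      rw [Function.iterate_succ_apply']
      have := hδ (parent^[m] ℓ) hne
      omega
  -- σ-order along the chain
  have hiterσ : ∀ m, (σ.symm (parent^[m] ℓ) : ℕ) ≤ σ.symm ℓ := by
    intro m
    induction m with
    | zero => simp
    | succ m ih =>
      rw [Function.iterate_succ_apply']
      by_cases h : parent^[m] ℓ = r
      · rw [h, hroot]; rw [h] at ih; exact ih
      · exact le_trans (Fin.le_of_lt (hparent _ h)) ih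
  -- the chosen time
  set i : ℕ := (σ.symm ℓ : ℕ) + 1 with hi
  refine ⟨i, by have := (σ.symm ℓ).isLt; omega, ?_⟩
  -- the d ancestors are all open
  have hopen : ∀ j, j < d → (parent^[d - j] ℓ) ∈ openVertices parent σ i := by
    intro j hj
    set a : Fin n := parent^[d - j] ℓ with ha
    set b : Fin n := parent^[d - (j + 1)] ℓ with hb
    have hδa : δ a = j := by rw [ha, hiterδ (d - j) (by omega)]; omega
    have hδb : δ b = j + 1 := by rw [hb, hiterδ (d - (j+1)) (by omega)]; omega
    have hab : parent b = a := by
      rw [ha, hb, show d - j = (d - (j + 1)) + 1 from by omega,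
        Function.iterate_succ_apply']
    have hbr : b ≠ r := by intro h; rw [h, hδr] at hδb; omega
    -- a has k children; pick one other than b
    have hcard := hchild_card a (by omega)
    have hbmem : b ∈ Finset.univ.filter fun u => parent u = a ∧ u ≠ r := by
      simp [hab, hbr]
    have h2le : 1 < (Finset.univ.filter fun u => parent u = a ∧ u ≠ r).card := by
      rw [hcard]; omega
    obtain ⟨c, hcmem, hcb⟩ := Finset.exists_mem_ne h2le b
    simp only [Finset.mem_filter] at hcmem
    obtain ⟨-, hpc, hcr⟩ := hcmem
    have hδc : δ c = j + 1 := by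
      have := hδ c hcr; rw [hpc, hδa] at this; exact this
    -- c is unvisited at time i
    have hcunvis : (σ.symm ℓ : ℕ) < σ.symm c := by
      by_contra hcon
      push_neg at hcon
      -- c visited: derive contradiction via contiguity
      obtain ⟨ℓ', hℓ'sub, hℓ'd⟩ := hexleaf c
      have hℓle : (σ.symm ℓ : ℕ) ≤ σ.symm ℓ' :=
        hℓmin ℓ' (by simp [hℓ'd])
      have hsub : InSubtree parent ℓ c :=
        hcontig c ℓ' ℓ hℓ'sub (by exact_mod_cast hcon) (by exact_mod_cast hℓle)
      obtain ⟨m, hm⟩ := insubtree_exists_iter hsub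
      -- c is an ancestor of ℓ at depth j+1, hence c = b
      have hmd : m ≤ d := by
        by_contra hmd
        push_neg at hmd
        -- parent^[d] ℓ = r, so parent^[m] ℓ = r for m ≥ d
        have hrd : parent^[d] ℓ = r := hδ0 _ (by rw [hiterδ d le_rfl]; omega)
        have : parent^[m] ℓ = r := by
          have : m = (m - d) + d := by omega
          rw [this, Function.iterate_add_apply, hrd]
          clear this
          induction (m - d) with
          | zero => rfl
          | succ p ihp => rw [Function.iterate_succ_apply', ihp, hroot]
        rw [hm, this, hδr] at hδc
        omega
      have : δ c = d - m := by rw [hm, hiterδ m hmd]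
      have hmval : m = d - (j + 1) := by omega
      have : c = b := by rw [hm, hmval]
      exact hcb this
    have hva : (σ.symm a : ℕ) ≤ σ.symm ℓ := by rw [ha]; exact hiterσ (d - j)
    refine ⟨by omega, c, Or.inl ⟨hpc, ?_⟩, by omega⟩
    intro h
    rw [h] at hδc
    omega
  -- conclude: the d ancestors give d distinct open vertices
  have hinj : Set.InjOn (fun j => parent^[d - j] ℓ) ↑(Finset.range d) := by
    intro j₁ h₁ j₂ h₂ heq
    simp only [Finset.coe_range, Set.mem_Iio] at h₁ h₂
    have e₁ : δ (parent^[d - j₁] ℓ) = j₁ := by rw [hiterδ (d - j₁) (by omega)]; omega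
    have e₂ : δ (parent^[d - j₂] ℓ) = j₂ := by rw [hiterδ (d - j₂) (by omega)]; omega
    have heq' : parent^[d - j₁] ℓ = parent^[d - j₂] ℓ := heq
    rw [← e₁, ← e₂, heq']
  have hsub : ↑((Finset.range d).image fun j => parent^[d - j] ℓ) ⊆
      openVertices parent σ i := by
    intro v hv
    simp only [Finset.coe_image, Set.mem_image, Finset.coe_range, Set.mem_Iio] at hv
    obtain ⟨j, hj, rfl⟩ := hv
    exact hopen j hj
  have hd : d ≤ (openVertices parent σ i).ncard := by
    have h1 : ((Finset.range d).image fun j => parent^[d - j] ℓ).card = d := by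
      rw [Finset.card_image_of_injOn hinj, Finset.card_range]
    calc d = (↑((Finset.range d).image fun j => parent^[d - j] ℓ) :
            Set (Fin n)).ncard := by rw [Set.ncard_coe_finset, h1]
      _ ≤ (openVertices parent σ i).ncard :=
          Set.ncard_le_ncard hsub (Set.toFinite _)
  omega
end
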